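/- arXiv:0910.5656 — 3 statements merged into one kernel-verified Lean document; each statement's English description precedes it below -/
import Mathlib

section
/- Let φ: [0,∞) → [0,∞) be a nonincreasing function and let α ≥ 1. Then α · ∫₀^∞ t^{α-1} φ(t)^α dt ≤ (∫₀^∞ φ(t) dt)^α. -/
/-!
Write `Φ x = ∫₀ˣ φ`. Since `φ` is nonincreasing, `x φ(x) ≤ Φ(x)`, hence
`α t^(α-1) φ(t)^α ≤ α Φ(t)^(α-1) φ(t) = (Φ^α)'(t)` and the inequality is the integral of this
bound. To avoid differentiating `Φ^α`, work on intervals `(a, b]` with `b ≤ q a`: there the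
integrand is at most `q^(α-1) Φ(a)^(α-1) φ`, and the tangent-line bound
`α x^(α-1) y + x^α ≤ (x + y)^α` gives `α ∫_(a,b] t^(α-1) φ^α + q^(α-1) Φ(a)^α ≤ q^(α-1) Φ(b)^α`.
Chaining such intervals and exhausting `(0, ∞)` proves the claim up to a factor `q^(α-1)`,
which tends to `1` as `q → 1`.
-/

open MeasureTheory Set Filter Topology
open scoped ENNReal

theorem Real.mul_rpow_sub_one_mul_add_rpow_le_add_rpow {x y α : ℝ} (hx : 0 ≤ x) (hy : 0 ≤ y)
    (hα : 1 ≤ α) : α * x ^ (α - 1) * y + x ^ α ≤ (x + y) ^ α := by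
  rcases hx.eq_or_lt with rfl | hx
  · rcases hα.eq_or_lt with rfl | hα
    · simp
    · simp [Real.zero_rpow (by linarith : α - 1 ≠ 0), Real.zero_rpow (by linarith : α ≠ 0),
        Real.rpow_nonneg hy]
  · have bernoulli :=
      one_add_mul_self_le_rpow_one_add (by linarith [div_nonneg hy hx.le] : (-1 : ℝ) ≤ y / x) hα
    calc α * x ^ (α - 1) * y + x ^ α = x ^ α * (1 + α * (y / x)) := by
          rw [Real.rpow_sub_one hx.ne']; field_simp; ring
      _ ≤ x ^ α * (1 + y / x) ^ α := by gcongr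
      _ = (x + y) ^ α := by
          rw [← Real.mul_rpow hx.le (by positivity)]; congr 1; field_simp

theorem ENNReal.ofReal_mul_rpow_sub_one_mul_add_rpow_le_add_rpow {α : ℝ} (hα : 1 ≤ α)
    (a d : ℝ≥0∞) : ENNReal.ofReal α * a ^ (α - 1) * d + a ^ α ≤ (a + d) ^ α := by
  have hα0 : 0 < α := by linarith
  rcases eq_or_ne a ⊤ with rfl | ha
  · simp [ENNReal.top_rpow_of_pos hα0]
  rcases eq_or_ne d ⊤ with rfl | hd
  · simp [ENNReal.top_rpow_of_pos hα0]
  obtain ⟨x, hx, rfl⟩ : ∃ x, 0 ≤ x ∧ ENNReal.ofReal x = a :=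
    ⟨a.toReal, ENNReal.toReal_nonneg, ENNReal.ofReal_toReal ha⟩
  obtain ⟨y, hy, rfl⟩ : ∃ y, 0 ≤ y ∧ ENNReal.ofReal y = d :=
    ⟨d.toReal, ENNReal.toReal_nonneg, ENNReal.ofReal_toReal hd⟩
  rw [← ENNReal.ofReal_add hx hy, ENNReal.ofReal_rpow_of_nonneg hx (by linarith),
    ENNReal.ofReal_rpow_of_nonneg hx hα0.le, ENNReal.ofReal_rpow_of_nonneg (by positivity) hα0.le,
    ← ENNReal.ofReal_mul hα0.le, ← ENNReal.ofReal_mul (by positivity),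
    ← ENNReal.ofReal_add (by positivity) (by positivity)]
  exact ENNReal.ofReal_le_ofReal (Real.mul_rpow_sub_one_mul_add_rpow_le_add_rpow hx hy hα)

theorem MeasureTheory.setLIntegral_Ioi_eq_iSup_Ioc {μ : Measure ℝ} (f : ℝ → ℝ≥0∞) (a : ℝ) :
    ∫⁻ x in Ioi a, f x ∂μ = ⨆ n : ℕ, ∫⁻ x in Ioc (a + (n + 1 : ℝ)⁻¹) (a + (n + 1)), f x ∂μ := by
  have hmono : Monotone fun n : ℕ => Ioc (a + (n + 1 : ℝ)⁻¹) (a + (n + 1)) := fun m n hmn => by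
    have : (m : ℝ) ≤ n := by exact_mod_cast hmn
    exact Ioc_subset_Ioc (by gcongr) (by gcongr)
  have hunion : ⋃ n : ℕ, Ioc (a + (n + 1 : ℝ)⁻¹) (a + (n + 1)) = Ioi a := by
    refine Subset.antisymm (iUnion_subset fun n x hx => ?_) fun x hx => ?_
    · exact lt_trans (by simp only [lt_add_iff_pos_right]; positivity) hx.1
    · have hx : 0 < x - a := sub_pos.2 hx
      obtain ⟨n, hn⟩ := exists_nat_ge (max (x - a) (x - a)⁻¹)
      refine mem_iUnion.2 ⟨n, ?_, ?_⟩
      · have := inv_lt_of_inv_lt₀ hx (by linarith [le_max_right (x - a) (x - a)⁻¹] :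
          (x - a)⁻¹ < n + 1)
        linarith
      · linarith [le_max_left (x - a) (x - a)⁻¹]
  rw [← hunion, setLIntegral_iUnion_of_directed _ hmono.directed_le]

theorem MeasureTheory.setLIntegral_Ioc_add_le_of_forall_le_mul {μ : Measure ℝ}
    {f H : ℝ → ℝ≥0∞} {q : ℝ} (hq : 1 < q)
    (hstep : ∀ a b, 0 < a → a ≤ b → b ≤ q * a → (∫⁻ x in Ioc a b, f x ∂μ) + H a ≤ H b)
    {a b : ℝ} (ha : 0 < a) (hab : a ≤ b) : (∫⁻ x in Ioc a b, f x ∂μ) + H a ≤ H b := by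
  obtain ⟨N, hN⟩ := pow_unbounded_of_one_lt (b / a) hq
  replace hN : b ≤ q ^ N * a := ((div_lt_iff₀ ha).1 hN).le
  induction N generalizing a with
  | zero => simp [le_antisymm hab (by simpa using hN)]
  | succ N ih =>
    obtain ⟨m, ham, hmb, hmq, hbm⟩ : ∃ m, a ≤ m ∧ m ≤ b ∧ m ≤ q * a ∧ b ≤ q ^ N * m := by
      rcases le_total b (q * a) with h | h
      · exact ⟨b, hab, le_rfl, h, le_mul_of_one_le_left (ha.le.trans hab) (one_le_pow₀ hq.le)⟩
      · exact ⟨q * a, le_mul_of_one_le_left ha.le hq.le, h, le_rfl,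
          by rwa [← mul_assoc, ← pow_succ]⟩
    calc (∫⁻ x in Ioc a b, f x ∂μ) + H a
        = (∫⁻ x in Ioc m b, f x ∂μ) + ((∫⁻ x in Ioc a m, f x ∂μ) + H a) := by
          rw [← Ioc_union_Ioc_eq_Ioc ham hmb,
            lintegral_union measurableSet_Ioc (Ioc_disjoint_Ioc_of_le le_rfl)]
          ring
      _ ≤ (∫⁻ x in Ioc m b, f x ∂μ) + H m := by gcongr; exact hstep a m ha ham hmq
      _ ≤ H b := ih (ha.trans_le ham) hmb hbm

theorem AntitoneOn.ofReal_sub_mul_le_setLIntegral {φ : ℝ → ℝ≥0∞} {a t : ℝ}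
    (hφ : AntitoneOn φ (Ioc a t)) (hat : a < t) :
    ENNReal.ofReal (t - a) * φ t ≤ ∫⁻ s in Ioc a t, φ s :=
  calc ENNReal.ofReal (t - a) * φ t = ∫⁻ _ in Ioc a t, φ t := by
        rw [setLIntegral_const, Real.volume_Ioc, mul_comm]
    _ ≤ ∫⁻ s in Ioc a t, φ s :=
        setLIntegral_mono' measurableSet_Ioc fun s hs => hφ hs ⟨hat, le_rfl⟩ hs.2

namespace AntitoneOn

variable {φ : ℝ → ℝ≥0∞} {α q : ℝ}

theorem ofReal_rpow_mul_rpow_le (hφ : AntitoneOn φ (Ioi 0)) (hα : 1 ≤ α) {a s : ℝ} (ha : 0 < a)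
    (has : a ≤ s) (hsq : s ≤ q * a) :
    ENNReal.ofReal (s ^ (α - 1)) * φ s ^ α
      ≤ ENNReal.ofReal (q ^ (α - 1)) * (∫⁻ t in Ioc 0 a, φ t) ^ (α - 1) * φ s := by
  have hα1 : 0 ≤ α - 1 := by linarith
  have hs : 0 < s := ha.trans_le has
  have hq : 0 ≤ q := by nlinarith
  calc ENNReal.ofReal (s ^ (α - 1)) * φ s ^ α
      = ENNReal.ofReal (s ^ (α - 1)) * φ s ^ (α - 1) * φ s := by
        have := ENNReal.rpow_add_of_nonneg (x := φ s) _ _ hα1 zero_le_one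
        rw [sub_add_cancel, ENNReal.rpow_one] at this
        rw [this, mul_assoc]
    _ ≤ ENNReal.ofReal ((q * a) ^ (α - 1)) * φ a ^ (α - 1) * φ s := by
        gcongr
        exact hφ ha hs has
    _ = ENNReal.ofReal (q ^ (α - 1)) * (ENNReal.ofReal a * φ a) ^ (α - 1) * φ s := by
        rw [Real.mul_rpow hq ha.le, ENNReal.ofReal_mul (Real.rpow_nonneg hq _),
          ENNReal.mul_rpow_of_nonneg _ _ hα1, ENNReal.ofReal_rpow_of_pos ha,
          mul_assoc (ENNReal.ofReal _)]
    _ ≤ ENNReal.ofReal (q ^ (α - 1)) * (∫⁻ t in Ioc 0 a, φ t) ^ (α - 1) * φ s := by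
        gcongr
        simpa using (hφ.mono Ioc_subset_Ioi_self).ofReal_sub_mul_le_setLIntegral ha

theorem setLIntegral_Ioc_add_le_of_le_mul (hφ : AntitoneOn φ (Ioi 0)) (hα : 1 ≤ α) {a b : ℝ}
    (ha : 0 < a) (hab : a ≤ b) (hbq : b ≤ q * a) :
    (∫⁻ s in Ioc a b, ENNReal.ofReal α * (ENNReal.ofReal (s ^ (α - 1)) * φ s ^ α))
        + ENNReal.ofReal (q ^ (α - 1)) * (∫⁻ s in Ioc 0 a, φ s) ^ α
      ≤ ENNReal.ofReal (q ^ (α - 1)) * (∫⁻ s in Ioc 0 b, φ s) ^ α := by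
  rw [lintegral_const_mul' _ _ ENNReal.ofReal_ne_top]
  set C := ENNReal.ofReal (q ^ (α - 1))
  set A := ∫⁻ s in Ioc 0 a, φ s
  set D := ∫⁻ s in Ioc a b, φ s
  have hsplit : ∫⁻ s in Ioc 0 b, φ s = A + D := by
    rw [← Ioc_union_Ioc_eq_Ioc ha.le hab,
      lintegral_union measurableSet_Ioc (Ioc_disjoint_Ioc_of_le le_rfl)]
  have hint : ∫⁻ s in Ioc a b, ENNReal.ofReal (s ^ (α - 1)) * φ s ^ α ≤ C * A ^ (α - 1) * D :=
    calc ∫⁻ s in Ioc a b, ENNReal.ofReal (s ^ (α - 1)) * φ s ^ α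
        ≤ ∫⁻ s in Ioc a b, C * A ^ (α - 1) * φ s :=
          setLIntegral_mono' measurableSet_Ioc fun s hs =>
            hφ.ofReal_rpow_mul_rpow_le hα ha hs.1.le (hs.2.trans hbq)
      _ = C * A ^ (α - 1) * D := lintegral_const_mul'' _ <|
          aemeasurable_restrict_of_antitoneOn measurableSet_Ioc <|
            hφ.mono (Ioc_subset_Ioi_self.trans (Ioi_subset_Ioi ha.le))
  calc ENNReal.ofReal α * (∫⁻ s in Ioc a b, ENNReal.ofReal (s ^ (α - 1)) * φ s ^ α) + C * A ^ α
      ≤ ENNReal.ofReal α * (C * A ^ (α - 1) * D) + C * A ^ α := by gcongr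
    _ = C * (ENNReal.ofReal α * A ^ (α - 1) * D + A ^ α) := by ring
    _ ≤ C * (A + D) ^ α := by
        gcongr
        exact ENNReal.ofReal_mul_rpow_sub_one_mul_add_rpow_le_add_rpow hα A D
    _ = C * (∫⁻ s in Ioc 0 b, φ s) ^ α := by rw [hsplit]

theorem ofReal_mul_setLIntegral_Ioi_le (hφ : AntitoneOn φ (Ioi 0)) (hα : 1 ≤ α) (hq : 1 < q) :
    ENNReal.ofReal α * ∫⁻ s in Ioi 0, ENNReal.ofReal (s ^ (α - 1)) * φ s ^ α
      ≤ ENNReal.ofReal (q ^ (α - 1)) * (∫⁻ s in Ioi 0, φ s) ^ α := by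
  rw [← lintegral_const_mul' _ _ ENNReal.ofReal_ne_top, setLIntegral_Ioi_eq_iSup_Ioc]
  refine iSup_le fun n => le_self_add.trans <|
    (setLIntegral_Ioc_add_le_of_forall_le_mul
      (H := fun x => ENNReal.ofReal (q ^ (α - 1)) * (∫⁻ s in Ioc 0 x, φ s) ^ α)
      hq (fun _ _ => hφ.setLIntegral_Ioc_add_le_of_le_mul hα) (by positivity) ?_).trans ?_
  · have h1 : (1 : ℝ) ≤ n + 1 := by linarith [n.cast_nonneg (α := ℝ)]
    gcongr
    exact (inv_le_one_of_one_le₀ h1).trans h1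
  · gcongr
    exact Ioc_subset_Ioi_self

end AntitoneOn

theorem stmt_0_general (φ : ℝ → ENNReal)
    (hanti : AntitoneOn φ (Set.Ici 0)) (α : ℝ) (hα : 1 ≤ α) :
    ENNReal.ofReal α * ∫⁻ t in Set.Ioi (0 : ℝ), ENNReal.ofReal (t ^ (α - 1)) * (φ t) ^ α
      ≤ (∫⁻ t in Set.Ioi (0 : ℝ), φ t) ^ α := by
  have hφ := hanti.mono Ioi_subset_Ici_self
  have hlim : Tendsto (fun q : ℝ => ENNReal.ofReal (q ^ (α - 1)) * (∫⁻ t in Ioi 0, φ t) ^ α)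
      (𝓝[>] 1) (𝓝 ((∫⁻ t in Ioi 0, φ t) ^ α)) := by
    have hcont : Tendsto (fun q : ℝ => ENNReal.ofReal (q ^ (α - 1))) (𝓝[>] 1) (𝓝 1) := by
      simpa using (ENNReal.tendsto_ofReal
        (Real.continuousAt_rpow_const 1 (α - 1) (Or.inl one_ne_zero)).tendsto).mono_left
          nhdsWithin_le_nhds
    simpa using ENNReal.Tendsto.mul_const hcont (Or.inl one_ne_zero)
  exact ge_of_tendsto hlim
    (eventually_nhdsWithin_of_forall fun q hq => hφ.ofReal_mul_setLIntegral_Ioi_le hα hq)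

/-- If `φ : [0,∞) → [0,∞]` is nonincreasing and `α ≥ 1`, then
`α ∫₀^∞ t^(α-1) φ(t)^α dt ≤ (∫₀^∞ φ(t) dt)^α`. -/
theorem stmt_0 (φ : ℝ → ENNReal) (hmeas : Measurable φ)
    (hanti : AntitoneOn φ (Set.Ici 0)) (α : ℝ) (hα : 1 ≤ α) :
    ENNReal.ofReal α * ∫⁻ t in Set.Ioi (0 : ℝ), ENNReal.ofReal (t ^ (α - 1)) * (φ t) ^ α
      ≤ (∫⁻ t in Set.Ioi (0 : ℝ), φ t) ^ α :=
  stmt_0_general φ hanti α hα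
end

section
/- Let f: (0, R₀] → [0,∞) satisfy f(t)/t^{Q-1} ≤ β for all t ∈ (0,R₀] where β := sup_{t∈(0,R₀]} f(t)/t^{Q-1} < ∞, and suppose f is nondecreasing with f(t) ≤ M for all t. Let λ ≥ 2 and suppose h: (0,R₀) → [0,∞) satisfies f(λt) > λ^{Q-1} R₀ h(t) for all t ∈ (0, R₀). Then ∫₀^{R₀} h(t) t^{-(Q-1)} dt ≤ β/λ + ((λ−1)/λ)·M/R₀^{Q-1}. -/
/-!
Split `(0, R₀)` at `R₀ / λ`. For `t ≤ R₀ / λ` the point `λ t` still lies in `(0, R₀]`, so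
`f (λ t) ≤ β (λ t)^{Q-1}` gives `h t · t^{-(Q-1)} < β / R₀`. For larger `t` only `f ≤ M` is
available, but there `t^{-(Q-1)} ≤ (λ / R₀)^{Q-1}`, which gives `h t · t^{-(Q-1)} < M / R₀^Q`.
Integrating this step function over `(0, R₀)` gives the bound.
-/

open MeasureTheory Set

section StepFunction

variable {a A B : ℝ}

theorem integrableOn_Ioo_ite_le (b c : ℝ) :
    IntegrableOn (fun t : ℝ => if t ≤ a then A else B) (Ioo b c) := by
  refine Measure.integrableOn_of_bounded (M := max |A| |B|) measure_Ioo_lt_top.ne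
    ((measurable_const.ite measurableSet_Iic measurable_const).aestronglyMeasurable) ?_
  filter_upwards with t
  split_ifs
  · exact le_max_left _ _
  · exact le_max_right _ _

theorem setIntegral_Ioo_ite_le {R : ℝ} (ha : 0 ≤ a) (haR : a < R) :
    ∫ t in Ioo 0 R, (if t ≤ a then A else B) = a * A + (R - a) * B := by
  have hint := integrableOn_Ioo_ite_le (a := a) (A := A) (B := B) 0 R
  rw [← Ioc_union_Ioo_eq_Ioo ha haR,
    setIntegral_union (Ioc_disjoint_Ioi_same.mono_right Ioo_subset_Ioi_self) measurableSet_Ioo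
      (hint.mono_set (Ioc_subset_Ioo_right haR)) (hint.mono_set (Ioo_subset_Ioo_left ha)),
    setIntegral_congr_fun measurableSet_Ioc (g := fun _ => A) fun t ht => if_pos ht.2,
    setIntegral_congr_fun measurableSet_Ioo (g := fun _ => B) fun t ht => if_neg (not_le.2 ht.1),
    setIntegral_const, setIntegral_const, Real.volume_real_Ioc_of_le ha,
    Real.volume_real_Ioo_of_le haR.le, smul_eq_mul, smul_eq_mul, sub_zero]

end StepFunction

section RescaledBounds

variable {p lam R t y : ℝ}

theorem mul_rpow_neg_lt_div_of_lt_mul_rpow {β : ℝ} (ht : 0 < t) (hlam : 0 < lam) (hR : 0 < R)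
    (h : lam ^ p * R * y < β * (lam * t) ^ p) : y * t ^ (-p) < β / R := by
  have hlamp : 0 < lam ^ p := Real.rpow_pos_of_pos hlam p
  have htp : 0 < t ^ p := Real.rpow_pos_of_pos ht p
  rw [Real.mul_rpow hlam.le ht.le] at h
  have hRy : R * y < β * t ^ p := by nlinarith
  rw [Real.rpow_neg ht.le, ← div_eq_mul_inv, div_lt_div_iff₀ htp hR]
  linarith

theorem mul_rpow_neg_lt_div_of_lt_of_le_mul {M : ℝ} (hlam : 0 < lam) (hR : 0 < R)
    (hp : 0 ≤ p) (hRt : R ≤ lam * t) (hy : 0 ≤ y) (h : lam ^ p * R * y < M) :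
    y * t ^ (-p) < M / (R ^ p * R) := by
  have hRp : 0 < R ^ p := Real.rpow_pos_of_pos hR p
  have hRl : 0 < R / lam := div_pos hR hlam
  have htneg : t ^ (-p) ≤ lam ^ p / R ^ p := by
    calc t ^ (-p) ≤ (R / lam) ^ (-p) :=
          Real.rpow_le_rpow_of_nonpos hRl ((div_le_iff₀' hlam).2 hRt) (neg_nonpos.2 hp)
      _ = lam ^ p / R ^ p := by
          rw [Real.rpow_neg hRl.le, Real.div_rpow hR.le hlam.le, inv_div]
  calc y * t ^ (-p) ≤ y * (lam ^ p / R ^ p) := mul_le_mul_of_nonneg_left htneg hy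
    _ = lam ^ p * R * y / (R ^ p * R) := by field_simp
    _ < M / (R ^ p * R) := div_lt_div_of_pos_right h (by positivity)

end RescaledBounds

theorem stmt_9_general (Q : ℝ) (hQ : 2 < Q) (R₀ : ℝ) (hR₀ : 0 < R₀) (lam : ℝ)
    (hlam : 2 ≤ lam) (f h : ℝ → ℝ) (β M : ℝ)
    (hβ : ∀ t ∈ Set.Ioc (0 : ℝ) R₀, f t ≤ β * t ^ (Q - 1))
    (hfM : ∀ t ∈ Set.Ioc (0 : ℝ) (lam * R₀), f t ≤ M)
    (hh0 : ∀ t ∈ Set.Ioo (0 : ℝ) R₀, 0 ≤ h t)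
    (hcontra : ∀ t ∈ Set.Ioo (0 : ℝ) R₀, lam ^ (Q - 1) * R₀ * h t < f (lam * t)) :
    ∫ t in Set.Ioo (0 : ℝ) R₀, h t * t ^ (-(Q - 1)) ≤
      β / lam + ((lam - 1) / lam) * M / R₀ ^ (Q - 1) := by
  have hlam0 : 0 < lam := by linarith
  have hsplit : R₀ / lam < R₀ := div_lt_self hR₀ (by linarith)
  have hbound : ∀ t ∈ Ioo 0 R₀, h t * t ^ (-(Q - 1)) ≤
      if t ≤ R₀ / lam then β / R₀ else M / (R₀ ^ (Q - 1) * R₀) := by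
    intro t ht
    have hlt := hcontra t ht
    split_ifs with hsmall
    · have hlamt : lam * t ≤ R₀ := (le_div_iff₀' hlam0).1 hsmall
      exact (mul_rpow_neg_lt_div_of_lt_mul_rpow ht.1 hlam0 hR₀
        (hlt.trans_le (hβ _ ⟨mul_pos hlam0 ht.1, hlamt⟩))).le
    · have hRt : R₀ ≤ lam * t := (div_le_iff₀' hlam0).1 (not_le.1 hsmall).le
      have hlamt : lam * t ≤ lam * R₀ := mul_le_mul_of_nonneg_left ht.2.le hlam0.le
      exact (mul_rpow_neg_lt_div_of_lt_of_le_mul hlam0 hR₀ (by linarith) hRt (hh0 t ht)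
        (hlt.trans_le (hfM _ ⟨mul_pos hlam0 ht.1, hlamt⟩))).le
  calc ∫ t in Ioo 0 R₀, h t * t ^ (-(Q - 1))
      ≤ ∫ t in Ioo 0 R₀, if t ≤ R₀ / lam then β / R₀ else M / (R₀ ^ (Q - 1) * R₀) :=
        integral_mono_of_nonneg
          ((ae_restrict_mem measurableSet_Ioo).mono fun t ht =>
            mul_nonneg (hh0 t ht) (Real.rpow_nonneg ht.1.le _))
          (integrableOn_Ioo_ite_le 0 R₀)
          ((ae_restrict_mem measurableSet_Ioo).mono hbound)
    _ = R₀ / lam * (β / R₀) + (R₀ - R₀ / lam) * (M / (R₀ ^ (Q - 1) * R₀)) :=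
        setIntegral_Ioo_ite_le (div_pos hR₀ hlam0).le hsplit
    _ = β / lam + ((lam - 1) / lam) * M / R₀ ^ (Q - 1) := by
        have := Real.rpow_pos_of_pos hR₀ (Q - 1)
        field_simp

/-- Key contradiction estimate for the covering argument of the isoperimetric
inequality: if `f(t) ≤ β t^{Q-1}` on `(0,R₀]`, `f ≤ M` on `(0, λR₀]`, `λ ≥ 2`,
and `f(λt) > λ^{Q-1} R₀ h(t)` for all `t ∈ (0,R₀)` with `h ≥ 0`, then
`∫₀^{R₀} h(t) t^{-(Q-1)} dt ≤ β/λ + ((λ-1)/λ)·M/R₀^{Q-1}`. -/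
theorem stmt_9 (Q : ℝ) (hQ : 2 < Q) (R₀ : ℝ) (hR₀ : 0 < R₀) (lam : ℝ)
    (hlam : 2 ≤ lam) (f h : ℝ → ℝ) (β M : ℝ)
    (hβ : ∀ t ∈ Set.Ioc (0 : ℝ) R₀, f t ≤ β * t ^ (Q - 1))
    (hf0 : ∀ t ∈ Set.Ioc (0 : ℝ) (lam * R₀), 0 ≤ f t)
    (hfM : ∀ t ∈ Set.Ioc (0 : ℝ) (lam * R₀), f t ≤ M)
    (hmono : MonotoneOn f (Set.Ioc (0 : ℝ) (lam * R₀)))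
    (hh0 : ∀ t ∈ Set.Ioo (0 : ℝ) R₀, 0 ≤ h t)
    (hhmeas : Measurable h)
    (hcontra : ∀ t ∈ Set.Ioo (0 : ℝ) R₀, lam ^ (Q - 1) * R₀ * h t < f (lam * t)) :
    ∫ t in Set.Ioo (0 : ℝ) R₀, h t * t ^ (-(Q - 1)) ≤
      β / lam + ((lam - 1) / lam) * M / R₀ ^ (Q - 1) :=
  stmt_9_general Q hQ R₀ hR₀ lam hlam f h β M hβ hfM hh0 hcontra
end

section
/- Let ρ be a left-invariant homogeneous distance on a Carnot group G that is C¹ away from the diagonal with |grad_H ρ_x| ≤ 1 at regular points, and let ψ(y) = ρ(x,y). Then for any C¹ hypersurface S ⊂ G with measure σ (the horizontal perimeter) and 0 < t < t₁, one has σ(S ∩ B_ρ(x,t₁)) − σ(S ∩ B_ρ(x,t)) ≥ ∫_t^{t₁} μ(∂B_ρ(x,s) ∩ S) ds, where μ denotes the induced (n−2)-dimensional horizontal measure on the level sets of ψ; consequently t ↦ σ(S ∩ B_ρ(x,t)) is a.e. differentiable with (d/dt)σ(S ∩ B_ρ(x,t)) ≥ μ(∂B_ρ(x,t) ∩ S)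 for a.e. t > 0. -/
/-!
Push everything forward to `ℝ` by `ψ = ρ(x,·)`. The coarea identity says that `m · ds` is the
image of `γ · σ`, and `γ ≤ 1` makes it a sub-measure of the image `ν` of `σ`; the first claim is
then additivity of `ν` on `(-∞, t) ∪ [t, t₁)`. The function `r ↦ σ(B(x,r)) = ν(-∞, r)` is
monotone, hence a.e. differentiable with derivative the density of `ν` with respect to Lebesgue
measure, and that density dominates `m` because `m · ds ≤ ν`.
-/

open MeasureTheory Set Filter
open scoped Topology ENNReal

namespace MeasureTheory.Measure

variable {α : Type*} [MeasurableSpace α]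

theorem withDensity_le_self (μ : Measure α) {f : α → ℝ≥0∞} (hf : ∀ a, f a ≤ 1) :
    μ.withDensity f ≤ μ :=
  Measure.le_iff.2 fun s hs => by
    rw [withDensity_apply _ hs]
    calc ∫⁻ a in s, f a ∂μ ≤ ∫⁻ _ in s, 1 ∂μ := lintegral_mono hf
      _ = μ s := setLIntegral_one s

theorem le_rnDeriv_of_withDensity_le {μ ν : Measure α} [SigmaFinite μ] [IsFiniteMeasure ν]
    {f : α → ℝ≥0∞} (hf : Measurable f) (h : μ.withDensity f ≤ ν) :
    f ≤ᵐ[μ] ν.rnDeriv μ := by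
  have : IsFiniteMeasure (μ.withDensity f) := isFiniteMeasure_of_le ν h
  have : IsFiniteMeasure (ν - μ.withDensity f) := isFiniteMeasure_of_le ν sub_le
  have hsplit := rnDeriv_add (ν - μ.withDensity f) (μ.withDensity f) μ
  rw [sub_add_cancel_of_le h] at hsplit
  filter_upwards [hsplit, rnDeriv_withDensity μ hf] with a hν hfa
  rw [hν, Pi.add_apply, hfa]
  exact le_add_self

theorem measure_Iio_add_measure_Ico_le {β : Type*} [LinearOrder β] [TopologicalSpace β]
    [OrderClosedTopology β] [MeasurableSpace β] [OpensMeasurableSpace β] {μ ν : Measure β}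
    (h : μ ≤ ν) {a b : β} (hab : a ≤ b) : ν (Iio a) + μ (Ico a b) ≤ ν (Iio b) :=
  calc ν (Iio a) + μ (Ico a b) ≤ ν (Iio a) + ν (Ico a b) := add_le_add_right (h _) _
    _ = ν (Iio b) := by
      rw [← measure_union ((Iio_disjoint_Ici le_rfl).mono_right Ico_subset_Ici_self)
        measurableSet_Ico, Iio_union_Ico_eq_Iio hab]

theorem withDensity_eq_map_withDensity_of_setLIntegral_Ico {μ : Measure α} {f : α → ℝ}
    (hf : Measurable f) {w : α → ℝ≥0∞} [IsFiniteMeasure (μ.withDensity w)] {m : ℝ → ℝ≥0∞}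
    (h : ∀ a b, a ≤ b → ∫⁻ y in f ⁻¹' Ico a b, w y ∂μ = ∫⁻ s in Ico a b, m s) :
    volume.withDensity m = (μ.withDensity w).map f := by
  have hIco : ∀ a b, a ≤ b →
      volume.withDensity m (Ico a b) = (μ.withDensity w).map f (Ico a b) := fun a b hab => by
    rw [withDensity_apply _ measurableSet_Ico, ← h a b hab, map_apply hf measurableSet_Ico,
      withDensity_apply _ (hf measurableSet_Ico)]
  refine ext_of_Ico' _ _ (fun a b hab => ?_) (fun a b hab => hIco a b hab.le)
  rw [hIco a b hab.le]
  exact measure_ne_top _ _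

end MeasureTheory.Measure

section StieltjesOfMeasure

variable (ν : Measure ℝ) [IsFiniteMeasure ν]

theorem monotone_measure_Iio_toReal : Monotone fun r => (ν (Iio r)).toReal := fun _ _ hab =>
  ENNReal.toReal_mono (measure_ne_top _ _) (measure_mono (Iio_subset_Iio hab))

theorem rightLim_measure_Iio_toReal (b : ℝ) :
    Function.rightLim (fun r => (ν (Iio r)).toReal) b = (ν (Iic b)).toReal := by
  apply rightLim_eq_of_tendsto
  have hlim : Tendsto (fun r => ν (Iio r)) (𝓝[>] b) (𝓝 (ν (⋂ r ∈ Ioi b, Iio r))) :=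
    tendsto_measure_biInter_gt (fun _ _ => measurableSet_Iio.nullMeasurableSet)
      (fun _ _ _ hij => Iio_subset_Iio hij) ⟨b + 1, by linarith, measure_ne_top _ _⟩
  have hInter : ⋂ r ∈ Ioi b, Iio r = Iic b := by
    ext z
    simp only [mem_iInter, mem_Iio, mem_Ioi, mem_Iic]
    exact ⟨fun h => le_of_forall_gt h, fun h _ hr => h.trans_lt hr⟩
  rw [hInter] at hlim
  exact (ENNReal.tendsto_toReal (measure_ne_top _ _)).comp hlim

theorem stieltjesFunction_measure_Iio_toReal :
    (monotone_measure_Iio_toReal ν).stieltjesFunction.measure = ν := by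
  refine Measure.ext_of_Ioc _ _ fun a b hab => ?_
  have hsub : Iic a ⊆ Iic b := Iic_subset_Iic.2 hab.le
  rw [StieltjesFunction.measure_Ioc, Monotone.stieltjesFunction_eq,
    Monotone.stieltjesFunction_eq, rightLim_measure_Iio_toReal, rightLim_measure_Iio_toReal,
    ← ENNReal.toReal_sub_of_le (measure_mono hsub) (measure_ne_top _ _),
    ENNReal.ofReal_toReal (ne_top_of_le_ne_top (measure_ne_top ν (Iic b)) tsub_le_self),
    ← measure_sdiff hsub measurableSet_Iic.nullMeasurableSet (measure_ne_top _ _), Iic_sdiff_Iic]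

theorem ae_hasDerivAt_measure_Iio_toReal :
    ∀ᵐ t, HasDerivAt (fun r => (ν (Iio r)).toReal) (ν.rnDeriv volume t).toReal t := by
  simpa only [stieltjesFunction_measure_Iio_toReal] using
    (monotone_measure_Iio_toReal ν).ae_hasDerivAt

end StieltjesOfMeasure

theorem stmt_19_general {G : Type*} [MeasurableSpace G]
    (ρ : G → G → ℝ) (x : G) (σ : Measure G) [IsFiniteMeasure σ]
    (hρmeas : Measurable (ρ x))
    (γ : G → ℝ) (m : ℝ → ENNReal) (hm : Measurable m)
    (hγ1 : ∀ y, γ y ≤ 1)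
    (hcoarea : ∀ t t₁ : ℝ, t ≤ t₁ →
      ∫⁻ y in {y | ρ x y ∈ Set.Ico t t₁}, ENNReal.ofReal (γ y) ∂σ =
        ∫⁻ s in Set.Ico t t₁, m s) :
    (∀ t t₁ : ℝ, 0 < t → t ≤ t₁ →
      σ {y | ρ x y < t} + ∫⁻ s in Set.Ico t t₁, m s ≤ σ {y | ρ x y < t₁}) ∧
    (∀ᵐ t ∂(volume.restrict (Set.Ioi (0 : ℝ))),
      ∃ d : ℝ, (m t).toReal ≤ d ∧
        HasDerivAt (fun r => (σ {y | ρ x y < r}).toReal) d t) := by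
  have hγσ := σ.withDensity_le_self fun y => ENNReal.ofReal_le_one.2 (hγ1 y)
  have : IsFiniteMeasure (σ.withDensity fun y => ENNReal.ofReal (γ y)) :=
    isFiniteMeasure_of_le σ hγσ
  have hball : ∀ r, σ {y | ρ x y < r} = σ.map (ρ x) (Iio r) := fun r =>
    (Measure.map_apply hρmeas measurableSet_Iio).symm
  have hm_le : volume.withDensity m ≤ σ.map (ρ x) := by
    rw [Measure.withDensity_eq_map_withDensity_of_setLIntegral_Ico hρmeas hcoarea]
    exact Measure.map_mono hγσ hρmeas
  refine ⟨fun t t₁ _ htt => ?_, ae_restrict_of_ae ?_⟩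
  · simpa only [hball, withDensity_apply _ measurableSet_Ico] using
      Measure.measure_Iio_add_measure_Ico_le hm_le htt
  · simp only [hball]
    filter_upwards [ae_hasDerivAt_measure_Iio_toReal (σ.map (ρ x)),
      Measure.le_rnDeriv_of_withDensity_le hm hm_le,
      Measure.rnDeriv_lt_top (σ.map (ρ x)) volume] with t hderiv hle hfin
    exact ⟨_, ENNReal.toReal_mono hfin.ne hle, hderiv⟩

/-- Coarea estimate for the radial function `ψ = ρ(x,·)` of a homogeneous
distance with `|grad_HS ψ| ≤ 1`: for the horizontal perimeter measure `σ` of a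
hypersurface `S` and the induced `(n-2)`-dimensional measures `m s` of the
sphere slices `∂B_ρ(x,s) ∩ S`, one has
`σ(S ∩ B(x,t)) + ∫_t^{t₁} m(s) ds ≤ σ(S ∩ B(x,t₁))`; consequently
`t ↦ σ(S ∩ B(x,t))` is a.e. differentiable with derivative `≥ m(t)` for a.e.
`t > 0`. -/
theorem stmt_19 {G : Type*} [MeasurableSpace G]
    (ρ : G → G → ℝ) (x : G) (σ : Measure G) [IsFiniteMeasure σ]
    (hρmeas : Measurable (ρ x))
    (γ : G → ℝ) (m : ℝ → ENNReal) (hm : Measurable m)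
    (hγ0 : ∀ y, 0 ≤ γ y) (hγ1 : ∀ y, γ y ≤ 1)
    (hcoarea : ∀ t t₁ : ℝ, t ≤ t₁ →
      ∫⁻ y in {y | ρ x y ∈ Set.Ico t t₁}, ENNReal.ofReal (γ y) ∂σ =
        ∫⁻ s in Set.Ico t t₁, m s) :
    (∀ t t₁ : ℝ, 0 < t → t ≤ t₁ →
      σ {y | ρ x y < t} + ∫⁻ s in Set.Ico t t₁, m s ≤ σ {y | ρ x y < t₁}) ∧
    (∀ᵐ t ∂(volume.restrict (Set.Ioi (0 : ℝ))),
      ∃ d : ℝ, (m t).toReal ≤ d ∧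
        HasDerivAt (fun r => (σ {y | ρ x y < r}).toReal) d t) :=
  stmt_19_general ρ x σ hρmeas γ m hm hγ1 hcoarea
end
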